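/- arXiv:2405.12576 — 2 statements merged into one kernel-verified Lean document; each statement's English description precedes it below -/
import Mathlib

section
/- Let n ≥ 1 and 0 < α < (n+1)/2. For every k > 0 and every [z,t] ∈ ℍₙ, the integral ∫_{ℍₙ} ((k + ¼|w−z|²)² + (s − t + ½ Im(w·z̄))²)^{−(n+1−α)} dH_{2n+1}[w,s] is finite, and by translation invariance it equals ∫_{ℍₙ} ((k + ¼|w|²)² + s²)^{−(n+1−α)} dH_{2n+1}[w,s]. -/
open MeasureTheory Complex

noncomputable section

/-- Twisted imaginary part Im(z·w̄) on ℂⁿ. -/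
def hIm {n : ℕ} (z w : Fin n → ℂ) : ℝ := ∑ i, (z i * (starRingEnd ℂ) (w i)).im

/-- Squared Euclidean norm |z|² on ℂⁿ. -/
def nsq {n : ℕ} (z : Fin n → ℂ) : ℝ := ∑ i, ‖z i‖ ^ 2

/-- Folland–Kaplan gauge distance on ℍₙ = ℂⁿ × ℝ: d([z,t],[w,s]) = d([z,t]·[w,s]⁻¹),
    i.e. d([z,t],[w,s])⁴ = (1/16)|z−w|⁴ + (t−s+½Im(z·w̄))². -/
def hGauge {n : ℕ} (x y : (Fin n → ℂ) × ℝ) : ℝ :=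
  ((1 / 16) * nsq (x.1 - y.1) ^ 2 + (x.2 - y.2 + (1 / 2) * hIm x.1 y.1) ^ 2) ^ ((1 : ℝ) / 4)

/-! The map `(w, s) ↦ (w - z, s + ½ Im(w·z̄) - t)` is a translation in `w` followed by a
shear in `s`, so it preserves Lebesgue measure on `ℂⁿ × ℝ`, and it carries the shifted kernel to the
centred one. For the centred kernel, Fubini and the substitution `s = a u` give
`∫ (a² + s²)^(-p) ds = a^(1-2p) ∫ (1 + u²)^(-p) du`, finite for `p > 1/2`; with `a = k + ¼|w|²`
the remaining weight `a^(1-2p)` decays like `|w|^(2-4p)`, integrable on `ℝ²ⁿ` iff `p > (n+1)/2`,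
which for `p = n + 1 - α` is exactly `α < (n+1)/2`. -/

section Shear

variable {E F : Type*} [AddGroup E] [MeasurableSpace E] [MeasurableAdd E]
  [NormedAddCommGroup F] (z : E) {g : E → ℝ}

def shearEquiv (hg : Measurable g) : E × ℝ ≃ᵐ E × ℝ where
  toFun x := (x.1 - z, x.2 + g x.1)
  invFun x := (x.1 + z, x.2 - g (x.1 + z))
  left_inv x := by simp
  right_inv x := by simp
  measurable_toFun :=
    ((measurable_sub_const' z).comp measurable_fst).prodMk
      (measurable_snd.add (hg.comp measurable_fst))
  measurable_invFun :=
    ((measurable_add_const z).comp measurable_fst).prodMk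
      (measurable_snd.sub (hg.comp ((measurable_add_const z).comp measurable_fst)))

variable (μ : Measure E) [μ.IsAddRightInvariant] [SFinite μ]

theorem measurePreserving_shearEquiv (hg : Measurable g) :
    MeasurePreserving (shearEquiv z hg) (μ.prod volume) (μ.prod volume) :=
  (measurePreserving_sub_right μ z).skew_product (g := fun w s => s + g w)
    (measurable_snd.add (hg.comp measurable_fst))
    (ae_of_all _ fun w => map_add_right_eq_self volume (g w))

theorem integrable_comp_shear_iff (hg : Measurable g) {f : E × ℝ → F} :
    Integrable (fun x => f (x.1 - z, x.2 + g x.1)) (μ.prod volume) ↔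
      Integrable f (μ.prod volume) :=
  (measurePreserving_shearEquiv z μ hg).integrable_comp_emb
    (MeasurableEquiv.measurableEmbedding _)

theorem integral_comp_shear [NormedSpace ℝ F] (hg : Measurable g) (f : E × ℝ → F) :
    ∫ x, f (x.1 - z, x.2 + g x.1) ∂(μ.prod volume) = ∫ x, f x ∂(μ.prod volume) :=
  (measurePreserving_shearEquiv z μ hg).integral_comp' f

end Shear

section Fiber

variable {p a : ℝ}

theorem integrable_one_add_sq_rpow_neg (hp : 1 / 2 < p) :
    Integrable fun s : ℝ => (1 + s ^ 2) ^ (-p) := by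
  have := integrable_rpow_neg_one_add_norm_sq (E := ℝ) (μ := volume) (r := 2 * p)
    (by simp; linarith)
  simpa [Real.norm_eq_abs, sq_abs, neg_div] using this

theorem sq_add_sq_rpow_neg (ha : 0 < a) (s : ℝ) :
    (a ^ 2 + s ^ 2) ^ (-p) = a ^ (-(2 * p)) * (1 + (s / a) ^ 2) ^ (-p) := by
  rw [show a ^ 2 + s ^ 2 = a ^ 2 * (1 + (s / a) ^ 2) by field_simp,
    Real.mul_rpow (by positivity) (by positivity), ← Real.rpow_natCast, ← Real.rpow_mul ha.le]
  norm_num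

theorem integrable_sq_add_sq_rpow_neg (hp : 1 / 2 < p) (ha : 0 < a) :
    Integrable fun s : ℝ => (a ^ 2 + s ^ 2) ^ (-p) := by
  simp_rw [sq_add_sq_rpow_neg ha]
  exact ((integrable_one_add_sq_rpow_neg hp).comp_div ha.ne').const_mul _

theorem integral_sq_add_sq_rpow_neg (ha : 0 < a) :
    ∫ s : ℝ, (a ^ 2 + s ^ 2) ^ (-p) = a ^ (1 - 2 * p) * ∫ s : ℝ, (1 + s ^ 2) ^ (-p) := by
  have hscale : (fun s : ℝ => (a ^ 2 + s ^ 2) ^ (-p)) =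
      fun s => a ^ (-(2 * p)) * (1 + (s / a) ^ 2) ^ (-p) := funext (sq_add_sq_rpow_neg ha)
  rw [hscale, integral_const_mul, Measure.integral_comp_div (fun s => (1 + s ^ 2) ^ (-p)),
    abs_of_pos ha, smul_eq_mul, ← mul_assoc, ← Real.rpow_add_one ha.ne', neg_add_eq_sub]

end Fiber

theorem integrable_sq_add_sq_rpow_neg_prod {E : Type*} [MeasurableSpace E] {μ : Measure E}
    [SFinite μ] {a : E → ℝ} (ha : Measurable a) (ha₀ : ∀ x, 0 < a x) {p : ℝ} (hp : 1 / 2 < p)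
    (hint : Integrable (fun x => a x ^ (1 - 2 * p)) μ) :
    Integrable (fun x : E × ℝ => (a x.1 ^ 2 + x.2 ^ 2) ^ (-p)) (μ.prod volume) := by
  have hmeas : Measurable fun x : E × ℝ => (a x.1 ^ 2 + x.2 ^ 2) ^ (-p) := by fun_prop
  refine (integrable_prod_iff hmeas.aestronglyMeasurable).2
    ⟨ae_of_all _ fun x => integrable_sq_add_sq_rpow_neg (a := a x) hp (ha₀ x), ?_⟩
  refine (hint.mul_const (∫ s : ℝ, (1 + s ^ 2) ^ (-p))).congr (ae_of_all _ fun x => ?_)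
  have hnorm : ∀ s : ℝ, ‖(a x ^ 2 + s ^ 2) ^ (-p)‖ = (a x ^ 2 + s ^ 2) ^ (-p) := fun s =>
    Real.norm_of_nonneg (Real.rpow_nonneg (by positivity) _)
  simp only [hnorm]
  exact (integral_sq_add_sq_rpow_neg (ha₀ x)).symm

theorem continuous_nsq {n : ℕ} : Continuous fun w : Fin n → ℂ => nsq w := by
  unfold nsq; fun_prop

theorem nsq_nonneg {n : ℕ} (w : Fin n → ℂ) : 0 ≤ nsq w :=
  Finset.sum_nonneg fun _ _ => sq_nonneg _

theorem sq_norm_le_nsq {n : ℕ} (w : Fin n → ℂ) : ‖w‖ ^ 2 ≤ nsq w := by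
  have hnorm : ‖w‖ ≤ √(nsq w) := (pi_norm_le_iff_of_nonneg (Real.sqrt_nonneg _)).2 fun i =>
    Real.le_sqrt_of_sq_le (Finset.single_le_sum (f := fun i => ‖w i‖ ^ 2)
      (fun _ _ => sq_nonneg _) (Finset.mem_univ i))
  exact (Real.le_sqrt (norm_nonneg w) (nsq_nonneg w)).1 hnorm

theorem integrable_add_mul_nsq_rpow_neg {n : ℕ} {k c q : ℝ} (hk : 0 < k) (hc : 0 < c)
    (hq : (n : ℝ) < q) : Integrable fun w : Fin n → ℂ => (k + c * nsq w) ^ (-q) := by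
  set m := min k c
  have hm : 0 < m := lt_min hk hc
  have hbound : ∀ w : Fin n → ℂ, m * (1 + ‖w‖ ^ 2) ≤ k + c * nsq w := fun w => by
    have := sq_norm_le_nsq w
    nlinarith [min_le_left k c, min_le_right k c, sq_nonneg ‖w‖]
  have hdom : Integrable fun w : Fin n → ℂ => m ^ (-q) * (1 + ‖w‖ ^ 2) ^ (-q) := by
    have := integrable_rpow_neg_one_add_norm_sq (E := Fin n → ℂ) (μ := volume) (r := 2 * q)
      (by simp [Module.finrank_pi_fintype]; linarith)
    simpa [neg_div] using this.const_mul (m ^ (-q))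
  have hmeas : Measurable fun w : Fin n → ℂ => (k + c * nsq w) ^ (-q) :=
    (continuous_nsq.measurable.const_mul c).const_add k |>.pow_const _
  refine hdom.mono' hmeas.aestronglyMeasurable (ae_of_all _ fun w => ?_)
  have hq₀ : 0 ≤ q := le_trans (Nat.cast_nonneg n) hq.le
  rw [Real.norm_of_nonneg (Real.rpow_nonneg (by positivity [nsq_nonneg w]) _),
    ← Real.mul_rpow hm.le (by positivity)]
  exact Real.rpow_le_rpow_of_nonpos (by positivity) (hbound w) (by linarith)

theorem integrable_add_mul_nsq_sq_add_sq_rpow_neg {n : ℕ} {k c p : ℝ} (hk : 0 < k) (hc : 0 < c)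
    (hp : ((n : ℝ) + 1) / 2 < p) :
    Integrable fun ws : (Fin n → ℂ) × ℝ => ((k + c * nsq ws.1) ^ 2 + ws.2 ^ 2) ^ (-p) := by
  have hp' : 1 / 2 < p := by linarith [n.cast_nonneg (α := ℝ)]
  rw [Measure.volume_eq_prod]
  refine integrable_sq_add_sq_rpow_neg_prod (continuous_nsq.measurable.const_mul c |>.const_add k)
    (fun w => by positivity [nsq_nonneg w]) hp' ?_
  simpa [neg_sub] using integrable_add_mul_nsq_rpow_neg (q := 2 * p - 1) hk hc (by linarith)

theorem stmt6_general (n : ℕ) (α : ℝ) (hα₂ : α < ((n : ℝ) + 1) / 2)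
    (k : ℝ) (hk : 0 < k) (z : Fin n → ℂ) (t : ℝ) :
    Integrable (fun ws : (Fin n → ℂ) × ℝ =>
        ((k + (1 / 4) * nsq (ws.1 - z)) ^ 2
            + (ws.2 - t + (1 / 2) * hIm ws.1 z) ^ 2) ^ (-((n : ℝ) + 1 - α))) ∧
    (∫ ws : (Fin n → ℂ) × ℝ,
        ((k + (1 / 4) * nsq (ws.1 - z)) ^ 2
            + (ws.2 - t + (1 / 2) * hIm ws.1 z) ^ 2) ^ (-((n : ℝ) + 1 - α)))
      = ∫ ws : (Fin n → ℂ) × ℝ,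
          ((k + (1 / 4) * nsq ws.1) ^ 2 + ws.2 ^ 2) ^ (-((n : ℝ) + 1 - α)) := by
  set p := (n : ℝ) + 1 - α
  have hcentered := integrable_add_mul_nsq_sq_add_sq_rpow_neg (n := n) (p := p) hk
    (by norm_num : (0 : ℝ) < 1 / 4) (by linarith)
  have hg : Measurable fun w : Fin n → ℂ => 1 / 2 * hIm w z - t := by unfold hIm; fun_prop
  have htranslate : (fun ws : (Fin n → ℂ) × ℝ =>
      ((k + 1 / 4 * nsq (ws.1 - z)) ^ 2 + (ws.2 - t + 1 / 2 * hIm ws.1 z) ^ 2) ^ (-p)) =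
      fun ws => ((k + 1 / 4 * nsq (ws.1 - z)) ^ 2 + (ws.2 + (1 / 2 * hIm ws.1 z - t)) ^ 2) ^ (-p) := by
    funext ws; ring_nf
  rw [htranslate]
  rw [Measure.volume_eq_prod] at hcentered ⊢
  exact ⟨(integrable_comp_shear_iff z _ hg).2 hcentered, integral_comp_shear z _ hg
    fun ws => ((k + 1 / 4 * nsq ws.1) ^ 2 + ws.2 ^ 2) ^ (-p)⟩

/-- for 0 < α < (n+1)/2 and k > 0 the integral
    ∫_{ℍₙ} ((k + ¼|w−z|²)² + (s − t + ½Im(w·z̄))²)^{−(n+1−α)} dH_{2n+1}[w,s]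
    is finite, and equals the corresponding integral centered at the origin. -/
theorem stmt6 (n : ℕ) (hn : 1 ≤ n) (α : ℝ) (hα₁ : 0 < α) (hα₂ : α < ((n : ℝ) + 1) / 2)
    (k : ℝ) (hk : 0 < k) (z : Fin n → ℂ) (t : ℝ) :
    Integrable (fun ws : (Fin n → ℂ) × ℝ =>
        ((k + (1 / 4) * nsq (ws.1 - z)) ^ 2
            + (ws.2 - t + (1 / 2) * hIm ws.1 z) ^ 2) ^ (-((n : ℝ) + 1 - α))) ∧
    (∫ ws : (Fin n → ℂ) × ℝ,
        ((k + (1 / 4) * nsq (ws.1 - z)) ^ 2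
            + (ws.2 - t + (1 / 2) * hIm ws.1 z) ^ 2) ^ (-((n : ℝ) + 1 - α)))
      = ∫ ws : (Fin n → ℂ) × ℝ,
          ((k + (1 / 4) * nsq ws.1) ^ 2 + ws.2 ^ 2) ^ (-((n : ℝ) + 1 - α)) :=
  stmt6_general n α hα₂ k hk z t
end
end

section
/- Let n ≥ 1 and γ > 1. The admissible region Γ_γ(ω) = {ζ ∈ 𝒰 : |(ζ_{n+1} − ω̄_{n+1})/(2i) − ¼ζ'·ω̄'| < γ(Im ζ_{n+1} − ¼|ζ'|²)} centered at a boundary point ω = Ψ⁻¹[w,s] coincides, in parametrized coordinates, with the set Ψ⁻¹{[z,t,h] ∈ ℍₙ × (0,∞) : d([z,t,h],[w,s]) < (2γh)^{1/2}}. -/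
open MeasureTheory Complex

noncomputable section

/-- Defining function ρ(ζ) = Im ζ_{n+1} − ¼|ζ'|². -/
def rho {n : ℕ} (ζ : (Fin n → ℂ) × ℂ) : ℝ := ζ.2.im - nsq ζ.1 / 4

/-- Parametrized gauge d([z,t,h],[w,s]) = d([[z,t]·[w,s]⁻¹, 4h]), where
    d([z,t,h]) = ((1/16)(|z|²+h)² + t²)^{1/4}. -/
def dParam {n : ℕ} (z : Fin n → ℂ) (t h : ℝ) (w : Fin n → ℂ) (s : ℝ) : ℝ :=
  ((1 / 16) * (nsq (z - w) + 4 * h) ^ 2 + (t - s + (1 / 2) * hIm z w) ^ 2) ^ ((1 : ℝ) / 4)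

/-! Write ζ = Ψ⁻¹[z,t,h] and ω = Ψ⁻¹[w,s]. Expanding |z − w|² by polarization, the quantity
(ζ_{n+1} − ω̄_{n+1})/(2i) − ¼ζ'·ω̄' has real part (|z − w|² + 4h)/8 and imaginary part
−(t − s + ½ Im z·w̄)/2, so its modulus is d([z,t,h],[w,s])²/2. Hence the admissibility condition
|…| < γh is exactly d² < 2γh. -/

/-- The polarization ρ(ζ, ω) of the defining function of 𝒰, so that ρ(ζ, ζ) = `rho ζ`. -/
def siegelPairing {n : ℕ} (ζ ω : (Fin n → ℂ) × ℂ) : ℂ :=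
  (ζ.2 - (starRingEnd ℂ) ω.2) / (2 * Complex.I) - (1 / 4) * ∑ i, ζ.1 i * (starRingEnd ℂ) (ω.1 i)

lemma nsq_sub {n : ℕ} (z w : Fin n → ℂ) :
    nsq (z - w) = nsq z + nsq w - 2 * (∑ i, z i * (starRingEnd ℂ) (w i)).re := by
  simp only [nsq, Complex.sq_norm, Complex.re_sum, ← Finset.sum_sub_distrib,
    ← Finset.sum_add_distrib, Finset.mul_sum]
  refine Finset.sum_congr rfl fun i _ => ?_
  simpa using Complex.normSq_sub (z i) (w i)

lemma dParam_nonneg {n : ℕ} (z : Fin n → ℂ) (t h : ℝ) (w : Fin n → ℂ) (s : ℝ) :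
    0 ≤ dParam z t h w s := by
  unfold dParam
  positivity

/-- The boundary point ω = Ψ⁻¹[w,s] is `(w, s + I * nsq w / 4)`, and every ζ is
Ψ⁻¹[ζ', Re ζ_{n+1}, rho ζ]. -/
lemma four_mul_normSq_siegelPairing {n : ℕ} (ζ : (Fin n → ℂ) × ℂ) (w : Fin n → ℂ) (s : ℝ) :
    4 * Complex.normSq (siegelPairing ζ (w, s + Complex.I * nsq w / 4))
      = (1 / 16) * (nsq (ζ.1 - w) + 4 * rho ζ) ^ 2
        + (ζ.2.re - s + (1 / 2) * hIm ζ.1 w) ^ 2 := by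
  set S : ℂ := ∑ i, ζ.1 i * (starRingEnd ℂ) (w i) with hS
  have hpair : siegelPairing ζ (w, s + Complex.I * nsq w / 4)
      = ⟨ζ.2.im / 2 + nsq w / 8 - S.re / 4, -ζ.2.re / 2 + s / 2 - S.im / 4⟩ := by
    apply Complex.ext <;>
      simp [siegelPairing, ← hS, Complex.div_re, Complex.div_im, Complex.normSq, map_ofNat] <;>
      ring
  have hIm_eq : hIm ζ.1 w = S.im := by simp [hIm, hS]
  rw [hpair, Complex.normSq_mk, nsq_sub, hIm_eq, rho]
  ring

lemma dParam_sq {n : ℕ} (ζ : (Fin n → ℂ) × ℂ) (w : Fin n → ℂ) (s : ℝ) :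
    dParam ζ.1 ζ.2.re (rho ζ) w s ^ 2
      = 2 * ‖siegelPairing ζ (w, s + Complex.I * nsq w / 4)‖ := by
  set A := siegelPairing ζ (w, s + Complex.I * nsq w / 4)
  have hquartic : dParam ζ.1 ζ.2.re (rho ζ) w s = (4 * Complex.normSq A) ^ ((1 : ℝ) / 4) := by
    rw [dParam, four_mul_normSq_siegelPairing]
  have hfour : (0 : ℝ) ≤ 4 * Complex.normSq A := mul_nonneg (by norm_num) (Complex.normSq_nonneg A)
  calc dParam ζ.1 ζ.2.re (rho ζ) w s ^ 2
      = (4 * Complex.normSq A) ^ ((1 : ℝ) / 2) := by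
        rw [hquartic, ← Real.rpow_natCast, ← Real.rpow_mul hfour]
        norm_num
    _ = 2 * ‖A‖ := by
        rw [← Real.sqrt_eq_rpow, Real.sqrt_mul (by norm_num), Complex.norm_def,
          show (4 : ℝ) = 2 ^ 2 by norm_num, Real.sqrt_sq (by norm_num)]

lemma norm_siegelPairing_lt_iff_dParam_lt {n : ℕ} (ζ : (Fin n → ℂ) × ℂ) (w : Fin n → ℂ)
    (s γ : ℝ) :
    ‖siegelPairing ζ (w, s + Complex.I * nsq w / 4)‖ < γ * rho ζ
      ↔ dParam ζ.1 ζ.2.re (rho ζ) w s < Real.sqrt (2 * γ * rho ζ) := by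
  rw [Real.lt_sqrt (dParam_nonneg _ _ _ _ _), dParam_sq, mul_assoc]
  exact (mul_lt_mul_iff_right₀ two_pos).symm

theorem stmt18_general (n : ℕ) (γ : ℝ) (w : Fin n → ℂ) (s : ℝ) :
    {ζ : (Fin n → ℂ) × ℂ | 0 < rho ζ ∧
        ‖(ζ.2 - (starRingEnd ℂ) ((s : ℂ) + Complex.I * (nsq w : ℂ) / 4))
              / (2 * Complex.I)
            - (1 / 4) * ∑ i, ζ.1 i * (starRingEnd ℂ) (w i)‖ < γ * rho ζ}
      = {ζ : (Fin n → ℂ) × ℂ | 0 < rho ζ ∧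
          dParam ζ.1 ζ.2.re (rho ζ) w s < Real.sqrt (2 * γ * rho ζ)} := by
  ext ζ
  exact and_congr_right fun _ => norm_siegelPairing_lt_iff_dParam_lt ζ w s γ

/-- the admissible region Γ_γ(ω) centered at the boundary point
    ω = Ψ⁻¹[w,s] coincides, in parametrized coordinates, with
    {[z,t,h] ∈ ℍₙ × (0,∞) : d([z,t,h],[w,s]) < (2γh)^{1/2}}. -/
theorem stmt18 (n : ℕ) (hn : 1 ≤ n) (γ : ℝ) (hγ : 1 < γ) (w : Fin n → ℂ) (s : ℝ) :
    {ζ : (Fin n → ℂ) × ℂ | 0 < rho ζ ∧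
        ‖(ζ.2 - (starRingEnd ℂ) ((s : ℂ) + Complex.I * (nsq w : ℂ) / 4))
              / (2 * Complex.I)
            - (1 / 4) * ∑ i, ζ.1 i * (starRingEnd ℂ) (w i)‖ < γ * rho ζ}
      = {ζ : (Fin n → ℂ) × ℂ | 0 < rho ζ ∧
          dParam ζ.1 ζ.2.re (rho ζ) w s < Real.sqrt (2 * γ * rho ζ)} :=
  stmt18_general n γ w s
end
end
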